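/- arXiv:2305.15012 — 6 statements merged into one kernel-verified Lean document; each statement's English description precedes it below -/
import Mathlib

section
/- Let t = (t_0,...,t_{N'-1}) and x = (x_0,...,x_{κ'-1}) be probability vectors sorted in decreasing order with κ' ≤ N', and suppose x majorizes t. Let (m_j)_{j=0}^{κ'-1} and (n_j)_{j=0}^{N'-1} be increasing nonnegative sequences with m_0 = n_0 = 0. Then ∑_{j=1}^{κ'-1} m_j x_j − ∑_{j=1}^{N'-1} n_j t_j ≤ ∑_{i=1}^{κ'-2}(m_i − n_i) t_i + ∑_{i=κ'-1}^{N'-1}(m_{κ'-1} − n_i) t_i. -/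
/-!
Put `M j = m (min j (κ - 1))`, a monotone weight with `M 0 = 0`. Since `x` vanishes from `κ` on,
`∑ m_j x_j = ∑_{j < N} M_j x_j`, and the right-hand side of the bound is `∑_{j < N} (M_j - n_j) t_j`.
So it suffices that `∑ M_j x_j ≤ ∑ M_j t_j`: by Abel summation the difference is
`-∑ (M_{j+1} - M_j) (X_{j+1} - T_{j+1})` for the prefix sums `X`, `T`, and majorization makes every
term of this sum nonnegative.
-/

open Finset

theorem Monotone.sum_range_mul_le_of_prefix_sum_le {R : Type*} [CommRing R] [PartialOrder R]
    [IsOrderedRing R] {N : ℕ} {M a b : ℕ → R} (hM : Monotone M)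
    (hprefix : ∀ k < N, ∑ i ∈ range (k + 1), b i ≤ ∑ i ∈ range (k + 1), a i)
    (htotal : ∑ i ∈ range N, a i = ∑ i ∈ range N, b i) :
    ∑ i ∈ range N, M i * a i ≤ ∑ i ∈ range N, M i * b i := by
  have hby_parts := sum_range_by_parts (n := N) M (fun i => a i - b i)
  simp only [smul_eq_mul, sum_sub_distrib, htotal, sub_self, mul_zero, zero_sub] at hby_parts
  have hterm_nonneg : ∀ i ∈ range (N - 1), 0 ≤ (M (i + 1) - M i) *
      (∑ j ∈ range (i + 1), a j - ∑ j ∈ range (i + 1), b j) := fun i hi =>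
    mul_nonneg (sub_nonneg.2 (hM i.le_succ))
      (sub_nonneg.2 (hprefix i (Nat.lt_of_lt_pred (mem_range.1 hi))))
  have hdiff : ∑ i ∈ range N, M i * b i - ∑ i ∈ range N, M i * a i =
      -∑ i ∈ range N, M i * (a i - b i) := by
    rw [← sum_sub_distrib, ← sum_neg_distrib]
    exact sum_congr rfl fun i _ => by ring
  rw [← sub_nonneg, hdiff, hby_parts, neg_neg]
  exact sum_nonneg hterm_nonneg

theorem sum_Ico_one_eq_sum_range {M : Type*} [AddCommMonoid M] {f : ℕ → M} (hf : f 0 = 0)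
    (k : ℕ) : ∑ i ∈ Ico 1 k, f i = ∑ i ∈ range k, f i := by
  rcases k.eq_zero_or_pos with rfl | hk
  · simp
  · rw [sum_range_eq_add_Ico f hk, hf, zero_add]

theorem sum_range_apply_min_eq {M : Type*} [AddCommMonoid M] {c N : ℕ} (hcN : c ≤ N)
    (h : ℕ → ℕ → M) (h00 : h 0 0 = 0) :
    ∑ i ∈ range N, h (min i c) i = ∑ i ∈ Ico 1 c, h i i + ∑ i ∈ Ico c N, h c i := by
  rw [← sum_range_add_sum_Ico _ hcN, sum_Ico_one_eq_sum_range (f := fun i => h i i) h00]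
  congr 1
  · exact sum_congr rfl fun i hi => by rw [min_eq_left (mem_range.1 hi).le]
  · exact sum_congr rfl fun i hi => by rw [min_eq_right (mem_Ico.1 hi).1]

theorem sum_range_mul_apply_min_eq {R : Type*} [NonUnitalNonAssocSemiring R] {κ N : ℕ}
    (hκN : κ ≤ N) (m x : ℕ → R) (hx : ∀ i, κ ≤ i → x i = 0) :
    ∑ i ∈ range N, m (min i (κ - 1)) * x i = ∑ i ∈ range κ, m i * x i := by
  rw [← sum_range_add_sum_Ico _ hκN]
  have htail : ∑ i ∈ Ico κ N, m (min i (κ - 1)) * x i = 0 :=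
    sum_eq_zero fun i hi => by rw [hx i (mem_Ico.1 hi).1, mul_zero]
  rw [htail, add_zero]
  exact sum_congr rfl fun i hi => by
    rw [min_eq_left (Nat.le_sub_one_of_lt (mem_range.1 hi))]

theorem stmt_2_general (N κ : ℕ) (hκN : κ ≤ N)
    (t x m n : ℕ → ℝ)
    (ht_sum : ∑ i ∈ Finset.range N, t i = 1)
    (hx_sum : ∑ i ∈ Finset.range κ, x i = 1)
    (hx_pad : ∀ i, κ ≤ i → x i = 0)
    (hmaj : ∀ k, k < N →
      ∑ i ∈ Finset.range (k + 1), t i ≤ ∑ i ∈ Finset.range (k + 1), x i)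
    (hm_mono : ∀ i j, i ≤ j → m i ≤ m j)
    (hm0 : m 0 = 0) (hn0 : n 0 = 0) :
    ∑ j ∈ Finset.Ico 1 κ, m j * x j - ∑ j ∈ Finset.Ico 1 N, n j * t j ≤
      ∑ i ∈ Finset.Ico 1 (κ - 1), (m i - n i) * t i +
        ∑ i ∈ Finset.Ico (κ - 1) N, (m (κ - 1) - n i) * t i := by
  set M : ℕ → ℝ := fun j => m (min j (κ - 1))
  have hM : Monotone M := fun i j hij => hm_mono _ _ (min_le_min_right _ hij)
  have hx_total : ∑ i ∈ range N, x i = ∑ i ∈ range N, t i := by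
    rw [ht_sum, ← hx_sum, ← sum_range_add_sum_Ico _ hκN,
      sum_eq_zero fun i hi => hx_pad i (mem_Ico.1 hi).1, add_zero]
  have hweighted : ∑ i ∈ range N, M i * x i ≤ ∑ i ∈ range N, M i * t i :=
    hM.sum_range_mul_le_of_prefix_sum_le hmaj hx_total
  rw [sum_Ico_one_eq_sum_range (by simp [hm0]), ← sum_range_mul_apply_min_eq hκN m x hx_pad,
    sum_Ico_one_eq_sum_range (by simp [hn0]),
    ← sum_range_apply_min_eq (Nat.sub_le_of_le_add (by omega)) (fun j i => (m j - n i) * t i)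
      (by simp [hm0, hn0])]
  simp only [sub_mul, sum_sub_distrib]
  linarith

/-- Global separability bound (Theorem 1, condition 2b). -/
theorem stmt_2 (N κ : ℕ) (hκN : κ ≤ N) (hκ : 1 ≤ κ)
    (t x m n : ℕ → ℝ)
    (ht_nonneg : ∀ i, 0 ≤ t i) (hx_nonneg : ∀ i, 0 ≤ x i)
    (ht_dec : ∀ i j, i ≤ j → t j ≤ t i) (hx_dec : ∀ i j, i ≤ j → x j ≤ x i)
    (ht_sum : ∑ i ∈ Finset.range N, t i = 1)
    (hx_sum : ∑ i ∈ Finset.range κ, x i = 1)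
    (hx_pad : ∀ i, κ ≤ i → x i = 0)
    (hmaj : ∀ k, k < N →
      ∑ i ∈ Finset.range (k + 1), t i ≤ ∑ i ∈ Finset.range (k + 1), x i)
    (hm_mono : ∀ i j, i ≤ j → m i ≤ m j) (hn_mono : ∀ i j, i ≤ j → n i ≤ n j)
    (hm_nonneg : ∀ i, 0 ≤ m i) (hn_nonneg : ∀ i, 0 ≤ n i)
    (hm0 : m 0 = 0) (hn0 : n 0 = 0) :
    ∑ j ∈ Finset.Ico 1 κ, m j * x j - ∑ j ∈ Finset.Ico 1 N, n j * t j ≤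
      ∑ i ∈ Finset.Ico 1 (κ - 1), (m i - n i) * t i +
        ∑ i ∈ Finset.Ico (κ - 1) N, (m (κ - 1) - n i) * t i :=
  stmt_2_general N κ hκN t x m n ht_sum hx_sum hx_pad hmaj hm_mono hm0 hn0
end

section
/- Any two-qubit state separable across the 1|2 cut, on a system with local Hamiltonians having energy gaps α_1 and α_2, satisfies Δ_{1|2} ≤ max{(α_1 − α_2)/2, 0}, where Δ_{1|2} = m_1 x_1 − ∑_{i=1}^{3} n_i t_i, with x the decreasing spectrum of the first marginal, t the decreasing spectrum of the global state, m_1 = α_1, and (n_1,n_2,n_3) the increasing ordering of (min(α_1,α_2), max(α_1,α_2), α_1+α_2). -/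
/-!
Since x majorizes t, the smaller marginal eigenvalue is bounded by the tail of the global
spectrum: x₁ = 1 - x₀ ≤ 1 - t₀ = t₁ + t₂ + t₃. As Δ increases with x₁, it suffices to bound
Δ at x₁ = t₁ + t₂ + t₃, where it equals (α₁ - α₂) t₂ - α₂ t₃ ≤ 0 if α₁ ≤ α₂, and
(α₁ - α₂) t₁ - α₂ t₃ ≤ (α₁ - α₂) / 2 if α₂ ≤ α₁, because t₁ ≤ t₀ forces t₁ ≤ 1 / 2.
-/

/-- `Δ_{1|2} = m₁ x₁ - ∑ nᵢ tᵢ`. -/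
def cutDelta (α₁ α₂ x₁ t₁ t₂ t₃ : ℝ) : ℝ :=
  α₁ * x₁ - (min α₁ α₂ * t₁ + max α₁ α₂ * t₂ + (α₁ + α₂) * t₃)

theorem cutDelta_le_cutDelta {α₁ α₂ x₁ y₁ t₁ t₂ t₃ : ℝ} (hα₁ : 0 ≤ α₁) (hxy : x₁ ≤ y₁) :
    cutDelta α₁ α₂ x₁ t₁ t₂ t₃ ≤ cutDelta α₁ α₂ y₁ t₁ t₂ t₃ := by
  unfold cutDelta
  gcongr

theorem cutDelta_tail_le {α₁ α₂ t₁ t₂ t₃ : ℝ} (hα₂ : 0 ≤ α₂)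
    (ht1 : t₁ ≤ 1 / 2) (ht2 : 0 ≤ t₂) (ht3 : 0 ≤ t₃) :
    cutDelta α₁ α₂ (t₁ + t₂ + t₃) t₁ t₂ t₃ ≤ max ((α₁ - α₂) / 2) 0 := by
  have hα₂t₃ : 0 ≤ α₂ * t₃ := mul_nonneg hα₂ ht3
  unfold cutDelta
  rcases le_total α₁ α₂ with h | h
  · rw [min_eq_left h, max_eq_right h]
    have : 0 ≤ (α₂ - α₁) * t₂ := mul_nonneg (sub_nonneg.2 h) ht2
    exact le_max_of_le_right (by linarith)
  · rw [min_eq_right h, max_eq_left h]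
    have : (α₁ - α₂) * t₁ ≤ (α₁ - α₂) * (1 / 2) :=
      mul_le_mul_of_nonneg_left ht1 (sub_nonneg.2 h)
    exact le_max_of_le_left (by linarith)

theorem stmt_7_general (α₁ α₂ : ℝ) (hα₁ : 0 < α₁) (hα₂ : 0 < α₂)
    (x₀ x₁ t₀ t₁ t₂ t₃ : ℝ)
    (hx_sum : x₀ + x₁ = 1)
    (ht3 : 0 ≤ t₃) (ht32 : t₃ ≤ t₂) (ht10 : t₁ ≤ t₀)
    (ht_sum : t₀ + t₁ + t₂ + t₃ = 1)
    (hmaj0 : t₀ ≤ x₀) :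
    α₁ * x₁ - (min α₁ α₂ * t₁ + max α₁ α₂ * t₂ + (α₁ + α₂) * t₃) ≤
      max ((α₁ - α₂) / 2) 0 := by
  have ht2 : 0 ≤ t₂ := ht3.trans ht32
  have hx₁ : x₁ ≤ t₁ + t₂ + t₃ := by linarith
  have ht1 : t₁ ≤ 1 / 2 := by linarith
  calc cutDelta α₁ α₂ x₁ t₁ t₂ t₃
      ≤ cutDelta α₁ α₂ (t₁ + t₂ + t₃) t₁ t₂ t₃ := cutDelta_le_cutDelta hα₁.le hx₁
    _ ≤ max ((α₁ - α₂) / 2) 0 := cutDelta_tail_le hα₂.le ht1 ht2 ht3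

/-- Proposition 1: any two-qubit state separable across the 1|2 cut (so that its
marginal spectrum x majorizes its global spectrum t, by Nielsen–Kempe) satisfies
Δ_{1|2} = m₁ x₁ − (n₁ t₁ + n₂ t₂ + n₃ t₃) ≤ max{(α₁ − α₂)/2, 0}, where m₁ = α₁ and
(n₁, n₂, n₃) = (min α₁ α₂, max α₁ α₂, α₁ + α₂). -/
theorem stmt_7 (α₁ α₂ : ℝ) (hα₁ : 0 < α₁) (hα₂ : 0 < α₂)
    (x₀ x₁ t₀ t₁ t₂ t₃ : ℝ)
    (hx1 : 0 ≤ x₁) (hx10 : x₁ ≤ x₀) (hx_sum : x₀ + x₁ = 1)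
    (ht3 : 0 ≤ t₃) (ht32 : t₃ ≤ t₂) (ht21 : t₂ ≤ t₁) (ht10 : t₁ ≤ t₀)
    (ht_sum : t₀ + t₁ + t₂ + t₃ = 1)
    (hmaj0 : t₀ ≤ x₀) (hmaj1 : t₀ + t₁ ≤ x₀ + x₁) (hmaj2 : t₀ + t₁ + t₂ ≤ x₀ + x₁) :
    α₁ * x₁ - (min α₁ α₂ * t₁ + max α₁ α₂ * t₂ + (α₁ + α₂) * t₃) ≤
      max ((α₁ - α₂) / 2) 0 :=
  stmt_7_general α₁ α₂ hα₁ hα₂ x₀ x₁ t₀ t₁ t₂ t₃ hx_sum ht3 ht32 ht10 ht_sum hmaj0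
end

section
/- Let t = (t_0,...,t_7) be a probability vector with decreasing entries and 0 < α_3 < α. Then (α − α_3) t_1 − α_3(t_4 + t_5) − α t_6 − (α + α_3) t_7 ≤ (α − α_3)/2, with equality at t = (1/2, 1/2, 0, 0, 0, 0, 0, 0). -/
/-! In a decreasing probability vector `t₁ ≤ 1/2`, which bounds the only positive term; every
other term is nonpositive because `0 < α₃ < α`. -/

open Finset

theorem Antitone.succ_mul_le_sum_range {t : ℕ → ℝ} (hmono : Antitone t) (hpos : ∀ i, 0 ≤ t i)
    {k n : ℕ} (hk : k < n) : (k + 1) * t k ≤ ∑ i ∈ range n, t i :=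
  calc (k + 1) * t k = ∑ _i ∈ range (k + 1), t k := by simp
    _ ≤ ∑ i ∈ range (k + 1), t i :=
      sum_le_sum fun i hi => hmono (Nat.lt_succ_iff.1 (mem_range.1 hi))
    _ ≤ ∑ i ∈ range n, t i :=
      sum_le_sum_of_subset_of_nonneg (range_subset_range.2 hk) fun i _ _ => hpos i

/-- Three-qubit state-independent bound across the 1|23 cut, case α₁ = α₂ = α > α₃:
(α − α₃) t₁ − α₃ (t₄ + t₅) − α t₆ − (α + α₃) t₇ ≤ (α − α₃)/2, with the maximum
attained at t = (1/2, 1/2, 0, 0, 0, 0, 0, 0). -/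
theorem stmt_9 (α α₃ : ℝ) (hα₃ : 0 < α₃) (h : α₃ < α) :
    IsGreatest {v : ℝ | ∃ t : ℕ → ℝ, (∀ i, 0 ≤ t i) ∧ (∀ i j, i ≤ j → t j ≤ t i) ∧
        (∑ i ∈ Finset.range 8, t i = 1) ∧
        v = (α - α₃) * t 1 - α₃ * (t 4 + t 5) - α * t 6 - (α + α₃) * t 7}
      ((α - α₃) / 2) := by
  refine ⟨⟨fun i => if i ≤ 1 then 1 / 2 else 0, ?_, ?_, ?_, ?_⟩, ?_⟩
  · intro i
    dsimp only
    split_ifs <;> norm_num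
  · intro i j hij
    dsimp only
    split_ifs <;> first | omega | norm_num
  · norm_num [sum_range_succ]
  · norm_num
    ring
  · rintro v ⟨t, hpos, hmono, hsum, rfl⟩
    have ht₁ : 2 * t 1 ≤ 1 := by
      simpa [hsum, one_add_one_eq_two] using
        Antitone.succ_mul_le_sum_range hmono hpos (k := 1) (n := 8) (by norm_num)
    linarith [mul_nonneg (sub_nonneg.2 h.le) (sub_nonneg.2 ht₁),
      mul_nonneg hα₃.le (add_nonneg (hpos 4) (hpos 5)),
      mul_nonneg (hα₃.trans h).le (hpos 6), mul_nonneg (add_pos (hα₃.trans h) hα₃).le (hpos 7)]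
end

section
/- Let t = (t_0,...,t_7) be a probability vector with decreasing entries and 0 < α_3 < α with α_3 ≥ 2α/3. Then (α − α_3)(t_1 + t_4 + t_5) + α t_3 ≤ (α − α_3)/4 + α/4, with equality at t = (1/4,1/4,1/4,1/4,0,0,0,0). -/
/-!
The sorted probability vectors of length `n` form the convex hull of the uniform vectors
`(1/k, …, 1/k, 0, …, 0)`, so a linear functional `∑ cᵢ tᵢ` is bounded on them by `M` as soon
as every partial sum `c₀ + ⋯ + c_{k-1}` is at most `k M` (Abel summation). For the weights
`(0, β, 0, α, β, β, 0, 0)` with `β = α - α₃` and `M = (β + α)/4`, the conditions for `k ≤ 4` need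
only `0 ≤ β ≤ α`, while those for `k = 5, 6` amount to `3β ≤ α`, i.e. `α₃ ≥ 2α/3`.
-/

open Finset

section AbelSummation

variable {R : Type*} [CommRing R] [LinearOrder R] [IsStrictOrderedRing R]

theorem sum_range_mul_le_of_antitone {d t : ℕ → R} {n : ℕ} (ht : Antitone t)
    (hd : ∀ k ≤ n, ∑ i ∈ range k, d i ≤ 0) :
    ∑ i ∈ range n, d i * t i ≤ t n * ∑ i ∈ range n, d i := by
  induction n with
  | zero => simp
  | succ n ih =>
    have hdn : ∑ i ∈ range (n + 1), d i ≤ 0 := hd (n + 1) le_rfl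
    calc ∑ i ∈ range (n + 1), d i * t i
        ≤ t n * ∑ i ∈ range n, d i + d n * t n := by
          rw [sum_range_succ]
          gcongr
          exact ih fun k hk => hd k (by omega)
      _ = t n * ∑ i ∈ range (n + 1), d i := by rw [sum_range_succ]; ring
      _ ≤ t (n + 1) * ∑ i ∈ range (n + 1), d i :=
          mul_le_mul_of_nonpos_right (ht n.le_succ) hdn

theorem sum_range_mul_le_of_partialSums_le {c t : ℕ → R} {n : ℕ} {M : R} (ht : Antitone t)
    (htn : 0 ≤ t n) (hsum : ∑ i ∈ range n, t i = 1)
    (hc : ∀ k ≤ n, ∑ i ∈ range k, c i ≤ k * M) :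
    ∑ i ∈ range n, c i * t i ≤ M := by
  have hd : ∀ k ≤ n, ∑ i ∈ range k, (c i - M) ≤ 0 := fun k hk => by
    simpa [sum_sub_distrib] using hc k hk
  have key := (sum_range_mul_le_of_antitone ht hd).trans
    (mul_nonpos_of_nonneg_of_nonpos htn (hd n le_rfl))
  simp only [sub_mul, sum_sub_distrib, ← mul_sum, hsum, mul_one] at key
  linarith

end AbelSummation

def cutWeights (α α₃ : ℝ) : ℕ → ℝ
  | 1 | 4 | 5 => α - α₃
  | 3 => α
  | _ => 0

theorem sum_range_eight_cutWeights_mul (α α₃ : ℝ) (t : ℕ → ℝ) :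
    ∑ i ∈ range 8, cutWeights α α₃ i * t i = (α - α₃) * (t 1 + t 4 + t 5) + α * t 3 := by
  simp only [sum_range_succ, sum_range_zero, cutWeights]
  ring

theorem sum_range_cutWeights_le {α α₃ : ℝ} (h : α₃ < α) (h23 : 2 * α / 3 ≤ α₃) {k : ℕ}
    (hk : k ≤ 8) : ∑ i ∈ range k, cutWeights α α₃ i ≤ k * ((α - α₃) / 4 + α / 4) := by
  interval_cases k <;>
    simp only [sum_range_succ, sum_range_zero, cutWeights, Nat.cast_ofNat] <;>
    norm_num <;> linarith

theorem stmt_11_general (α α₃ : ℝ) (h : α₃ < α) (h23 : 2 * α / 3 ≤ α₃) :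
    IsGreatest {v : ℝ | ∃ t : ℕ → ℝ, (∀ i, 0 ≤ t i) ∧ (∀ i j, i ≤ j → t j ≤ t i) ∧
        (∑ i ∈ Finset.range 8, t i = 1) ∧
        v = (α - α₃) * (t 1 + t 4 + t 5) + α * t 3}
      ((α - α₃) / 4 + α / 4) := by
  constructor
  · refine ⟨fun i => if i < 4 then 1 / 4 else 0, fun i => by positivity, ?_, ?_, by norm_num; ring⟩
    · intro i j hij
      dsimp only
      split_ifs <;> first | omega | norm_num
    · norm_num [sum_range_succ]
  · rintro v ⟨t, ht0, hmono, hsum, rfl⟩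
    rw [← sum_range_eight_cutWeights_mul]
    exact sum_range_mul_le_of_partialSums_le hmono (ht0 8) hsum
      fun k hk => sum_range_cutWeights_le h h23 hk

/-- Three-qubit state-independent bound across the 12|3 cut, case
α₁ = α₂ = α > α₃ with α₃ ≥ 2α/3: (α − α₃)(t₁ + t₄ + t₅) + α t₃ ≤ (α − α₃)/4 + α/4,
with the maximum attained at t = (1/4,1/4,1/4,1/4,0,0,0,0). -/
theorem stmt_11 (α α₃ : ℝ) (hα₃ : 0 < α₃) (h : α₃ < α) (h23 : 2 * α / 3 ≤ α₃) :
    IsGreatest {v : ℝ | ∃ t : ℕ → ℝ, (∀ i, 0 ≤ t i) ∧ (∀ i j, i ≤ j → t j ≤ t i) ∧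
        (∑ i ∈ Finset.range 8, t i = 1) ∧
        v = (α - α₃) * (t 1 + t 4 + t 5) + α * t 3}
      ((α - α₃) / 4 + α / 4) :=
  stmt_11_general α α₃ h h23
end

section
/- Let t = (t_0,...,t_7) be a probability vector with decreasing entries and 0 < α_3 ≤ 2α/3 with α_3 < α. Then (α − α_3)(t_1 + t_4 + t_5) + α t_3 ≤ (α − α_3)/2 + α/6, with equality at t = (1/6,1/6,1/6,1/6,1/6,1/6,0,0). -/
/-!
The objective is a linear functional `∑ cᵢ tᵢ` of `t`. By summation by parts, a decreasing
probability vector is a convex combination of the uniform vectors `(1/k, …, 1/k, 0, …)`, so the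
functional is bounded by the largest prefix average `(1/k) ∑_{i<k} cᵢ` of its weights. For the
weights of the 12|3 cut these averages are at most `(α − α₃)/2 + α/6`: for `k = 4, 5` this is
the condition `α₃ ≤ 2α/3`, and at `k = 6` there is equality.
-/

open Finset

theorem sum_mul_nonneg_of_antitone_of_sum_range_nonneg {a t : ℕ → ℝ} {n : ℕ}
    (ht : Antitone t) (ht0 : ∀ i, 0 ≤ t i) (ha : ∀ k ≤ n, 0 ≤ ∑ i ∈ range k, a i) :
    0 ≤ ∑ i ∈ range n, a i * t i := by
  have hparts := sum_range_by_parts t a n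
  simp only [smul_eq_mul] at hparts
  simp_rw [mul_comm (a _), hparts]
  have hlast : 0 ≤ t (n - 1) * ∑ i ∈ range n, a i := mul_nonneg (ht0 _) (ha n le_rfl)
  have hsteps : ∑ i ∈ range (n - 1), (t (i + 1) - t i) * ∑ j ∈ range (i + 1), a j ≤ 0 :=
    sum_nonpos fun i hi => mul_nonpos_of_nonpos_of_nonneg
      (sub_nonpos.2 (ht (Nat.le_succ i)))
      (ha _ (by have := mem_range.1 hi; omega))
  linarith

theorem sum_mul_le_of_antitone_of_sum_range_le {c t : ℕ → ℝ} {n : ℕ} {M : ℝ}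
    (ht : Antitone t) (ht0 : ∀ i, 0 ≤ t i) (hsum : ∑ i ∈ range n, t i = 1)
    (hc : ∀ k ≤ n, ∑ i ∈ range k, c i ≤ k * M) :
    ∑ i ∈ range n, c i * t i ≤ M := by
  have key := sum_mul_nonneg_of_antitone_of_sum_range_nonneg (a := fun i => M - c i) ht ht0
    fun k hk => by simpa [sum_sub_distrib, mul_comm] using hc k hk
  simp only [sub_mul, sum_sub_distrib, ← mul_sum, hsum, mul_one] at key
  linarith

def cutWeight (α α₃ : ℝ) : ℕ → ℝ
  | 1 | 4 | 5 => α - α₃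
  | 3 => α
  | _ => 0

theorem sum_cutWeight_mul (α α₃ : ℝ) (t : ℕ → ℝ) :
    ∑ i ∈ range 8, cutWeight α α₃ i * t i = (α - α₃) * (t 1 + t 4 + t 5) + α * t 3 := by
  simp only [sum_range_succ, sum_range_zero, cutWeight]
  ring

theorem sum_range_cutWeight_le {α α₃ : ℝ} (hα₃ : 0 < α₃) (h : α₃ < α) (h23 : α₃ ≤ 2 * α / 3)
    {k : ℕ} (hk : k ≤ 8) :
    ∑ i ∈ range k, cutWeight α α₃ i ≤ k * ((α - α₃) / 2 + α / 6) := by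
  interval_cases k <;> simp only [sum_range_succ, sum_range_zero, cutWeight] <;> push_cast <;>
    linarith

/-- Three-qubit state-independent bound across the 12|3 cut, case
α₁ = α₂ = α > α₃ with α₃ ≤ 2α/3: (α − α₃)(t₁ + t₄ + t₅) + α t₃ ≤ (α − α₃)/2 + α/6,
with the maximum attained at t = (1/6,1/6,1/6,1/6,1/6,1/6,0,0). -/
theorem stmt_12 (α α₃ : ℝ) (hα₃ : 0 < α₃) (h : α₃ < α) (h23 : α₃ ≤ 2 * α / 3) :
    IsGreatest {v : ℝ | ∃ t : ℕ → ℝ, (∀ i, 0 ≤ t i) ∧ (∀ i j, i ≤ j → t j ≤ t i) ∧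
        (∑ i ∈ Finset.range 8, t i = 1) ∧
        v = (α - α₃) * (t 1 + t 4 + t 5) + α * t 3}
      ((α - α₃) / 2 + α / 6) := by
  refine ⟨⟨fun i => if i < 6 then 1 / 6 else 0, ?_, ?_, ?_, ?_⟩, ?_⟩
  · intro i
    positivity
  · intro i j hij
    by_cases hj : j < 6
    · simp [hj, hij.trans_lt hj]
    · simp only [if_neg hj]
      positivity
  · norm_num [sum_range_succ]
  · norm_num
    ring
  · rintro v ⟨t, ht0, ht, hsum, rfl⟩
    rw [← sum_cutWeight_mul]
    exact sum_mul_le_of_antitone_of_sum_range_le ht ht0 hsum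
      fun k hk => sum_range_cutWeight_le hα₃ h h23 hk
end

section
/- Consider the N-qubit noisy GHZ state ρ_λ with global spectrum t_0 = (1 + (2^N − 1)λ)/2^N and t_i = (1 − λ)/2^N for i ≥ 1, and a κ-qubit marginal (κ ≤ N−1), which is (1−λ)I/2^κ + λ(|0...0⟩⟨0...0| + |1...1⟩⟨1...1|)/2, with eigenvalues (1 − λ)/2^κ + λ/2 (multiplicity 2) and (1−λ)/2^κ (multiplicity 2^κ − 2). Then the marginal majorizes the global spectrum if and only if λ ≤ (2^{N−κ} − 1)/(2^{N−1} + 2^{N−κ} − 1). -/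
lemma ind_sum (m n : ℕ) :
    ∑ i ∈ Finset.range m, (if i < n then (1:ℝ) else 0) = ((min m n : ℕ) : ℝ) := by
  induction m with
  | zero => simp
  | succ m ih =>
    rw [Finset.sum_range_succ, ih]
    rcases lt_or_ge m n with h | h
    · rw [if_pos h]
      have : min (m+1) n = min m n + 1 := by omega
      rw [this]; push_cast; ring
    · rw [if_neg (not_lt.mpr h)]
      have : min (m+1) n = min m n := by omega
      rw [this, add_zero]

/-- For the N-qubit noisy GHZ state, the κ-qubit marginal spectrum
(eigenvalues (1−λ)/2^κ + λ/2 with multiplicity 2 and (1−λ)/2^κ with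
multiplicity 2^κ − 2) majorizes the global spectrum
(t₀ = (1 + (2^N − 1)λ)/2^N, t_i = (1−λ)/2^N for 1 ≤ i < 2^N) if and only if
λ ≤ (2^{N−κ} − 1)/(2^{N−1} + 2^{N−κ} − 1). -/
theorem stmt_13 (N κ : ℕ) (hN : 2 ≤ N) (hκ1 : 1 ≤ κ) (hκ : κ ≤ N - 1)
    (lam : ℝ) (hl0 : 0 ≤ lam) (hl1 : lam ≤ 1)
    (t x : ℕ → ℝ)
    (ht : ∀ i, t i = if i = 0 then (1 + ((2 : ℝ) ^ N - 1) * lam) / 2 ^ N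
        else if i < 2 ^ N then (1 - lam) / 2 ^ N else 0)
    (hx : ∀ i, x i = if i < 2 then (1 - lam) / 2 ^ κ + lam / 2
        else if i < 2 ^ κ then (1 - lam) / 2 ^ κ else 0) :
    (∀ k, k < 2 ^ N →
        ∑ i ∈ Finset.range (k + 1), t i ≤ ∑ i ∈ Finset.range (k + 1), x i) ↔
      lam ≤ ((2 : ℝ) ^ (N - κ) - 1) / ((2 : ℝ) ^ (N - 1) + (2 : ℝ) ^ (N - κ) - 1) := by
  have hκN : κ ≤ N := by omega
  have hKpos : (0:ℝ) < 2^κ := by positivity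
  have hNpos : (0:ℝ) < 2^N := by positivity
  have h2κ : 2 ≤ 2^κ := by
    calc 2 = 2^1 := rfl
    _ ≤ 2^κ := Nat.pow_le_pow_right (by norm_num) hκ1
  -- decomposed forms
  have ht' : ∀ i, t i = (1-lam)/2^N * (if i < 2^N then (1:ℝ) else 0)
      + lam * (if i = 0 then (1:ℝ) else 0) := by
    intro i; rw [ht]
    by_cases h0 : i = 0
    · subst h0
      rw [if_pos rfl, if_pos (Nat.pow_pos (n := N) (by norm_num)), if_pos rfl]
      field_simp; ring
    · rw [if_neg h0, if_neg h0]
      by_cases h1 : i < 2^N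
      · rw [if_pos h1, if_pos h1]; ring
      · rw [if_neg h1, if_neg h1]; ring
  have hx' : ∀ i, x i = (1-lam)/2^κ * (if i < 2^κ then (1:ℝ) else 0)
      + lam/2 * (if i < 2 then (1:ℝ) else 0) := by
    intro i; rw [hx]
    by_cases h2 : i < 2
    · rw [if_pos h2, if_pos h2, if_pos (lt_of_lt_of_le h2 h2κ)]; ring
    · rw [if_neg h2, if_neg h2]
      by_cases h1 : i < 2^κ
      · rw [if_pos h1, if_pos h1]; ring
      · rw [if_neg h1, if_neg h1]; ring
  have hsum_t : ∀ k, ∑ i ∈ Finset.range (k+1), t i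
      = (1-lam)/2^N * ((min (k+1) (2^N) : ℕ):ℝ) + lam := by
    intro k
    simp_rw [ht']
    rw [Finset.sum_add_distrib, ← Finset.mul_sum, ← Finset.mul_sum, ind_sum]
    congr 1
    rw [Finset.sum_ite_eq' (Finset.range (k+1)) 0 (fun _ => (1:ℝ))]
    simp
  have hsum_x : ∀ k, ∑ i ∈ Finset.range (k+1), x i
      = (1-lam)/2^κ * ((min (k+1) (2^κ) : ℕ):ℝ) + lam/2 * ((min (k+1) 2 : ℕ):ℝ) := by
    intro k
    simp_rw [hx']
    rw [Finset.sum_add_distrib, ← Finset.mul_sum, ← Finset.mul_sum, ind_sum, ind_sum]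
  -- algebra facts
  have hKA : (2:ℝ)^κ * (2:ℝ)^(N-κ) = 2^N := by rw [← pow_add]; congr 1; omega
  have h2B : (2:ℝ)^N = 2 * 2^(N-1) := by rw [← pow_succ']; congr 1; omega
  have hApos : (0:ℝ) < 2^(N-κ) := by positivity
  have hBpos : (0:ℝ) < 2^(N-1) := by positivity
  have hA2 : (2:ℝ) ≤ 2^(N-κ) := by
    calc (2:ℝ) = 2^1 := (pow_one 2).symm
    _ ≤ 2^(N-κ) := by apply pow_le_pow_right₀ (by norm_num); omega
  have hB1 : (1:ℝ) ≤ 2^(N-1) := by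
    calc (1:ℝ) = 2^0 := rfl
    _ ≤ 2^(N-1) := by apply pow_le_pow_right₀ (by norm_num); omega
  have hden : (0:ℝ) < 2^(N-1) + 2^(N-κ) - 1 := by linarith
  have e1 : (2:ℝ)^κ * (2:ℝ)^(N-κ) = 2 * 2^(N-1) := by rw [hKA, h2B]
  have e2 : lam * ((2:ℝ)^κ * (2:ℝ)^(N-κ)) = lam * (2 * 2^(N-1)) := by rw [e1]
  -- key equivalence
  have hiff : ((1-lam)/2^N + lam ≤ (1-lam)/2^κ + lam/2) ↔
      lam ≤ ((2:ℝ)^(N-κ) - 1) / ((2:ℝ)^(N-1) + (2:ℝ)^(N-κ) - 1) := by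
    rw [le_div_iff₀ hden]
    have L : (1-lam)/(2:ℝ)^N + lam = (1 - lam + lam * 2^N)/2^N := by field_simp
    have R : (1-lam)/(2:ℝ)^κ + lam/2 = ((1-lam)*2 + lam*2^κ)/(2^κ*2) := by
      field_simp
    rw [L, R, div_le_div_iff₀ hNpos (by positivity), h2B]
    constructor
    · intro h
      have key : (2:ℝ)^κ * (lam * (2^(N-1) + 2^(N-κ) - 1)) ≤ 2^κ * (2^(N-κ) - 1) := by
        nlinarith [h, e1, e2]
      exact le_of_mul_le_mul_left key hKpos
    · intro h
      have key := mul_le_mul_of_nonneg_left h hKpos.le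
      nlinarith [key, e1, e2]
  constructor
  · intro h
    have h0 := h 0 (Nat.pow_pos (n := N) (by norm_num))
    rw [hsum_t, hsum_x] at h0
    rw [min_eq_left (by simpa using Nat.one_le_two_pow : 0+1 ≤ 2^N), min_eq_left (by simpa using Nat.one_le_two_pow : 0+1 ≤ 2^κ),
      min_eq_left (by omega : 0+1 ≤ 2)] at h0
    push_cast at h0
    rw [mul_one, mul_one, mul_one] at h0
    exact hiff.mp h0
  · intro h k hk
    rw [hsum_t, hsum_x, min_eq_left (by omega : k+1 ≤ 2^N)]
    rcases Nat.eq_zero_or_pos k with rfl | hkpos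
    · rw [min_eq_left (by simpa using Nat.one_le_two_pow : 0+1 ≤ 2^κ), min_eq_left (by omega : 0+1 ≤ 2)]
      push_cast
      rw [mul_one, mul_one, mul_one]
      exact hiff.mpr h
    · rw [min_eq_right (by omega : 2 ≤ k+1)]
      have hl1' : (0:ℝ) ≤ 1 - lam := by linarith
      rcases le_or_gt (k+1) (2^κ) with hc | hc
      · rw [min_eq_left hc]
        have hple : (2:ℝ)^κ ≤ 2^N := by
          calc (2:ℝ)^κ = 2^κ * 1 := (mul_one _).symm
          _ ≤ 2^κ * 2^(N-κ) := by nlinarith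
          _ = 2^N := hKA
        have hdd : (1-lam)/2^N ≤ (1-lam)/2^κ :=
          div_le_div_of_nonneg_left hl1' hKpos hple
        have hk0 : (0:ℝ) ≤ ((k+1 : ℕ):ℝ) := by positivity
        nlinarith [mul_le_mul_of_nonneg_right hdd hk0]
      · rw [min_eq_right hc.le]
        have hkN : ((k+1:ℕ):ℝ) ≤ 2^N := by exact_mod_cast Nat.succ_le_of_lt hk
        have hcast : (((2:ℕ)^κ : ℕ):ℝ) = (2:ℝ)^κ := by push_cast; ring
        rw [hcast, div_mul_cancel₀ _ hKpos.ne']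
        have hb : (1-lam)/2^N * ((k+1:ℕ):ℝ) ≤ 1 - lam := by
          rw [div_mul_eq_mul_div, div_le_iff₀ hNpos]
          nlinarith [mul_le_mul_of_nonneg_left hkN hl1']
        push_cast at hb ⊢
        nlinarith [hb]
end
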